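/- Let (H_X, H_Z) be a CSS code and H_C ∈ F₂^{(n_c−k_c) × n_c} a classical parity check matrix of full row rank. Let H'_X, H'_Z be the check matrices of the generalized thickened code. Then: (1) ker(H'_X) = rowspan(H'_Z) + span{ (z ⊗ u, 0) : z ∈ ker(H_X), u ∈ F₂^{n_c} }, where (z ⊗ u, 0) denotes the vector supported on region A equal to the Kronecker product z ⊗ u and zero on region B; and (2) for every z ∈ ker(H_X) \ rowspan(H_Z) and every u ∈ F₂^{n_c} with u ∉ rowspan(H_C), the vector (z ⊗ u, 0) does NOT lie in rowspan(H'_Z). In other words, the Z logical operators of the thickened code are spanned, modulo Z stabilizers, by ( (ker H_X / rowspan H_Z) ⊗ (F₂^{n_c} / rowspan H_C) | 0 ). -/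

import Mathlib

open Matrix

/-- The `F₂`-span of the rows of a matrix. -/
noncomputable def rowSpan {ι κ : Type*} [Fintype ι] [Fintype κ] (M : Matrix ι κ (ZMod 2)) :
    Submodule (ZMod 2) (κ → ZMod 2) :=
  Submodule.span (ZMod 2) (Set.range fun i => M i)

/-- The kernel `{v : M v = 0}` of a matrix, as a submodule. -/
noncomputable def kerMat {ι κ : Type*} [Fintype ι] [Fintype κ] (M : Matrix ι κ (ZMod 2)) :
    Submodule (ZMod 2) (κ → ZMod 2) :=
  LinearMap.ker M.mulVecLin

/-- X check matrix of the generalized thickened code: `( H_X ⊗ I_{n_c} | I_{n_X} ⊗ H_Cᵀ )`.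
Region A qubits are indexed by `Fin n × Fin nc`, region B qubits by `Fin nX × Fin r`. -/
def thickX {nX n r nc : ℕ} (HX : Matrix (Fin nX) (Fin n) (ZMod 2))
    (HC : Matrix (Fin r) (Fin nc) (ZMod 2)) :
    Matrix (Fin nX × Fin nc) ((Fin n × Fin nc) ⊕ (Fin nX × Fin r)) (ZMod 2) :=
  Matrix.of fun s p =>
    match p with
    | Sum.inl (i, c) => if c = s.2 then HX s.1 i else 0
    | Sum.inr (x, j) => if x = s.1 then HC j s.2 else 0

/-- Z check matrix of the generalized thickened code:
first block row `( H_Z ⊗ I_{n_c} | 0 )`,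
second block row `( I_n ⊗ H_C | H_Xᵀ ⊗ I_{n_c-k_c} )`. -/
def thickZ {nX nZ n r nc : ℕ} (HX : Matrix (Fin nX) (Fin n) (ZMod 2))
    (HZ : Matrix (Fin nZ) (Fin n) (ZMod 2)) (HC : Matrix (Fin r) (Fin nc) (ZMod 2)) :
    Matrix ((Fin nZ × Fin nc) ⊕ (Fin n × Fin r)) ((Fin n × Fin nc) ⊕ (Fin nX × Fin r)) (ZMod 2) :=
  Matrix.of fun s p =>
    match s, p with
    | Sum.inl (z, c), Sum.inl (i, c') => if c' = c then HZ z i else 0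
    | Sum.inl _, Sum.inr _ => 0
    | Sum.inr (i, j), Sum.inl (i', c) => if i' = i then HC j c else 0
    | Sum.inr (i, j), Sum.inr (x, j') => if j' = j then HX x i else 0

/-!
A vector on the qubits of the thickened code is a pair of matrices `(A, B)`, one per region.
It lies in `ker H'_X` iff `H_X A = B H_C`, and the Z stabilizers are the pairs
`(H_Zᵀ Γ₁ + Γ₂ H_C, H_X Γ₂)`. As `H_C` has full row rank it has a right inverse `G`; adding the
stabilizer with `Γ₂ = A G` clears region B and leaves a matrix all of whose columns lie in
`ker H_X`, i.e. a sum of tensors `z ⊗ e_c`. Conversely, if `z ⊗ u = H_Zᵀ Γ₁ + Γ₂ H_C`, a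
functional `f` with `f z = 1` that vanishes on `rowspan H_Z` turns this into `u = (f Γ₂) H_C`.
-/

lemma Matrix.add_eq_zero_iff_eq_of_zmod_two {m n : Type*} {M N : Matrix m n (ZMod 2)} :
    M + N = 0 ↔ M = N := by
  rw [add_eq_zero_iff_eq_neg, show -N = N from ext fun _ _ => ZMod.neg_eq_self_mod_two _]

section RowSpan

variable {ι κ : Type*} [Fintype ι] [Fintype κ]

lemma mem_rowSpan_iff {M : Matrix ι κ (ZMod 2)} {v : κ → ZMod 2} :
    v ∈ rowSpan M ↔ ∃ c, c ᵥ* M = v := by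
  rw [rowSpan, ← M.row_def, ← range_vecMulLinear]
  rfl

lemma vecMul_mem_rowSpan (M : Matrix ι κ (ZMod 2)) (c : ι → ZMod 2) : c ᵥ* M ∈ rowSpan M :=
  mem_rowSpan_iff.2 ⟨c, rfl⟩

lemma exists_dotProduct_eq_one_of_notMem_rowSpan {M : Matrix ι κ (ZMod 2)} {z : κ → ZMod 2}
    (hz : z ∉ rowSpan M) : ∃ f, f ⬝ᵥ z = 1 ∧ M *ᵥ f = 0 := by
  classical
  obtain ⟨φ, hφz, hφM⟩ := Submodule.exists_dual_map_eq_bot_of_notMem hz inferInstance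
  have hφ : ∀ v, φ v = (fun k => φ (Pi.single k 1)) ⬝ᵥ v := fun v => by
    conv_lhs => rw [pi_eq_sum_univ' v]
    simp [dotProduct, mul_comm]
  refine ⟨fun k => φ (Pi.single k 1), ?_, ?_⟩
  · rw [← hφ]
    exact Fin.eq_one_of_ne_zero _ hφz
  · ext i
    rw [mulVec, dotProduct_comm, ← hφ, Pi.zero_apply]
    exact (Submodule.eq_bot_iff _).1 hφM _ ⟨_, Submodule.subset_span ⟨i, rfl⟩, rfl⟩

lemma mem_rowSpan_of_vecMulVec_eq {μ ν : Type*} [Fintype μ] [Fintype ν]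
    {P : Matrix ι κ (ZMod 2)} {Q : Matrix μ ν (ZMod 2)} {z : κ → ZMod 2} {u : ν → ZMod 2}
    {Γ₁ : Matrix ι ν (ZMod 2)} {Γ₂ : Matrix κ μ (ZMod 2)} (hz : z ∉ rowSpan P)
    (h : vecMulVec z u = Pᵀ * Γ₁ + Γ₂ * Q) : u ∈ rowSpan Q := by
  obtain ⟨f, hfz, hfP⟩ := exists_dotProduct_eq_one_of_notMem_rowSpan hz
  have hu := congrArg (f ᵥ* ·) h
  simp only [vecMul_vecMulVec, hfz, one_smul, vecMul_add, ← vecMul_vecMul, vecMul_transpose,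
    hfP, zero_vecMul, zero_add] at hu
  rw [hu]
  exact vecMul_mem_rowSpan _ _

end RowSpan

lemma exists_mul_eq_one_of_linearIndependent_row {K m n : Type*} [Field K] [Fintype m]
    [DecidableEq m] [Fintype n] {M : Matrix m n K} (hM : LinearIndependent K M.row) :
    ∃ G : Matrix n m K, M * G = 1 := by
  classical
  obtain ⟨g, hg⟩ := M.vecMulLinear.exists_leftInverse_of_injective
    (LinearMap.ker_eq_bot.2 (vecMul_injective_iff.2 hM))
  refine ⟨(LinearMap.toMatrix' g)ᵀ, ext_iff_vecMul.2 fun v => ?_⟩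
  rw [← vecMul_vecMul, vecMul_transpose, LinearMap.toMatrix'_mulVec, vecMul_one]
  exact LinearMap.congr_fun hg v

section BlockVec

variable {l m n p q R : Type*}

def blockVec (A : Matrix m n R) (B : Matrix p q R) : m × n ⊕ p × q → R :=
  Sum.elim (fun x => A x.1 x.2) (fun y => B y.1 y.2)

lemma blockVec_add [Add R] (A A' : Matrix m n R) (B B' : Matrix p q R) :
    blockVec (A + A') (B + B') = blockVec A B + blockVec A' B' := by
  ext (_ | _) <;> rfl

lemma blockVec_inj {A A' : Matrix m n R} {B B' : Matrix p q R} :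
    blockVec A B = blockVec A' B' ↔ A = A' ∧ B = B' := by
  refine ⟨fun h => ⟨?_, ?_⟩, fun h => h.1 ▸ h.2 ▸ rfl⟩ <;> ext i j
  exacts [congrFun h (.inl (i, j)), congrFun h (.inr (i, j))]

lemma exists_eq_blockVec (w : m × n ⊕ p × q → R) :
    ∃ (A : Matrix m n R) (B : Matrix p q R), w = blockVec A B :=
  ⟨fun i j => w (.inl (i, j)), fun i j => w (.inr (i, j)), by ext (_ | _) <;> rfl⟩

/-- The span of the vectors `(z ⊗ u, 0)` with `z ∈ ker H`. -/
def kerTensorSpan [Semiring R] [Fintype m] (H : Matrix l m R) :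
    Submodule R (m × n ⊕ p × q → R) :=
  Submodule.span R {w | ∃ (z : m → R) (u : n → R), H *ᵥ z = 0 ∧ w = blockVec (vecMulVec z u) 0}

lemma blockVec_mem_kerTensorSpan [CommRing R] [Fintype m] [Fintype n] [DecidableEq n]
    {H : Matrix l m R} {M : Matrix m n R} (hM : H * M = 0) :
    blockVec M (0 : Matrix p q R) ∈ kerTensorSpan H := by
  have hsum : blockVec M (0 : Matrix p q R) =
      ∑ j, blockVec (vecMulVec (M.col j) (Pi.single j 1)) 0 := by
    ext (_ | _) <;> simp [blockVec, Finset.sum_apply, vecMulVec, Pi.single_apply]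
  rw [hsum]
  refine Submodule.sum_mem _ fun j _ => Submodule.subset_span ⟨M.col j, Pi.single j 1, ?_, rfl⟩
  rw [← mulVec_single_one, mulVec_mulVec, hM, zero_mulVec]

end BlockVec

section Thickening

variable {nX nZ n r nc : ℕ} (HX : Matrix (Fin nX) (Fin n) (ZMod 2))
  (HZ : Matrix (Fin nZ) (Fin n) (ZMod 2)) (HC : Matrix (Fin r) (Fin nc) (ZMod 2))

lemma thickX_mulVec_blockVec (A : Matrix (Fin n) (Fin nc) (ZMod 2))
    (B : Matrix (Fin nX) (Fin r) (ZMod 2)) :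
    thickX HX HC *ᵥ blockVec A B = fun s => (HX * A + B * HC) s.1 s.2 := by
  ext ⟨x, c⟩
  rw [mulVec, dotProduct, Fintype.sum_sum_type, Fintype.sum_prod_type, Fintype.sum_prod_type]
  simp [thickX, blockVec, mul_apply, mul_comm]

lemma blockVec_mem_kerMat_thickX_iff {A : Matrix (Fin n) (Fin nc) (ZMod 2)}
    {B : Matrix (Fin nX) (Fin r) (ZMod 2)} :
    blockVec A B ∈ kerMat (thickX HX HC) ↔ HX * A + B * HC = 0 := by
  rw [kerMat, LinearMap.mem_ker, mulVecLin_apply, thickX_mulVec_blockVec, ← ext_iff]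
  simp [funext_iff]

lemma blockVec_vecMul_thickZ (Γ₁ : Matrix (Fin nZ) (Fin nc) (ZMod 2))
    (Γ₂ : Matrix (Fin n) (Fin r) (ZMod 2)) :
    blockVec Γ₁ Γ₂ ᵥ* thickZ HX HZ HC = blockVec (HZᵀ * Γ₁ + Γ₂ * HC) (HX * Γ₂) := by
  ext (⟨i, c⟩ | ⟨x, j⟩) <;>
  · rw [vecMul, dotProduct, Fintype.sum_sum_type, Fintype.sum_prod_type, Fintype.sum_prod_type]
    simp [thickZ, blockVec, mul_apply, mul_comm]

lemma mem_rowSpan_thickZ_iff {w : (Fin n × Fin nc) ⊕ (Fin nX × Fin r) → ZMod 2} :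
    w ∈ rowSpan (thickZ HX HZ HC) ↔
      ∃ (Γ₁ : Matrix (Fin nZ) (Fin nc) (ZMod 2)) (Γ₂ : Matrix (Fin n) (Fin r) (ZMod 2)),
        blockVec (HZᵀ * Γ₁ + Γ₂ * HC) (HX * Γ₂) = w := by
  rw [mem_rowSpan_iff]
  constructor
  · rintro ⟨γ, rfl⟩
    obtain ⟨Γ₁, Γ₂, rfl⟩ := exists_eq_blockVec γ
    exact ⟨Γ₁, Γ₂, (blockVec_vecMul_thickZ ..).symm⟩
  · rintro ⟨Γ₁, Γ₂, rfl⟩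
    exact ⟨_, blockVec_vecMul_thickZ ..⟩

variable {HX HZ} in
lemma rowSpan_thickZ_le_kerMat_thickX (hcss : HX * HZᵀ = 0) :
    rowSpan (thickZ HX HZ HC) ≤ kerMat (thickX HX HC) := by
  rintro _ hw
  obtain ⟨Γ₁, Γ₂, rfl⟩ := (mem_rowSpan_thickZ_iff ..).1 hw
  rw [blockVec_mem_kerMat_thickX_iff, Matrix.mul_add, ← Matrix.mul_assoc, hcss, Matrix.zero_mul,
    zero_add, Matrix.mul_assoc]
  exact add_eq_zero_iff_eq_of_zmod_two.2 rfl

lemma kerTensorSpan_le_kerMat_thickX : kerTensorSpan HX ≤ kerMat (thickX HX HC) := by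
  rw [kerTensorSpan, Submodule.span_le]
  rintro _ ⟨z, u, hz, rfl⟩
  rw [SetLike.mem_coe, blockVec_mem_kerMat_thickX_iff, mul_vecMulVec, hz, Matrix.zero_mul,
    add_zero]
  ext
  simp

variable {HX} in
lemma kerMat_thickX_le (hrank : LinearIndependent (ZMod 2) HC.row) :
    kerMat (thickX HX HC) ≤ rowSpan (thickZ HX HZ HC) ⊔ kerTensorSpan HX := by
  intro w hw
  obtain ⟨A, B, rfl⟩ := exists_eq_blockVec w
  rw [blockVec_mem_kerMat_thickX_iff, add_eq_zero_iff_eq_of_zmod_two] at hw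
  obtain ⟨G, hG⟩ := exists_mul_eq_one_of_linearIndependent_row hrank
  have hB : HX * (A * G) = B := by
    rw [← Matrix.mul_assoc, hw, Matrix.mul_assoc, hG, Matrix.mul_one]
  have hsplit :
      blockVec A B = blockVec (A * G * HC) (HX * (A * G)) + blockVec (A + A * G * HC) 0 := by
    rw [← blockVec_add, hB, add_zero, add_left_comm, add_eq_zero_iff_eq_of_zmod_two.2 rfl,
      add_zero]
  rw [hsplit]
  refine Submodule.add_mem_sup ((mem_rowSpan_thickZ_iff ..).2 ⟨0, A * G, ?_⟩)
    (blockVec_mem_kerTensorSpan ?_)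
  · rw [Matrix.mul_zero, zero_add]
  · rw [Matrix.mul_add, hw, ← Matrix.mul_assoc, hB]
    exact add_eq_zero_iff_eq_of_zmod_two.2 rfl

variable {HX HZ} in
lemma blockVec_vecMulVec_notMem_rowSpan_thickZ {z : Fin n → ZMod 2} (hz : z ∉ rowSpan HZ)
    {u : Fin nc → ZMod 2} (hu : u ∉ rowSpan HC) :
    blockVec (vecMulVec z u) 0 ∉ rowSpan (thickZ HX HZ HC) := by
  rw [mem_rowSpan_thickZ_iff]
  rintro ⟨Γ₁, Γ₂, h⟩
  exact hu (mem_rowSpan_of_vecMulVec_eq hz (blockVec_inj.1 h).1.symm)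

end Thickening

/-- **Z logical operators of the generalized thickened code** are spanned, modulo the
Z stabilizers, by `( (ker H_X / rowspan H_Z) ⊗ (F₂^{n_c} / rowspan H_C) | 0 )`. -/
theorem thickened_Z_logicals {nX nZ n r nc : ℕ}
    (HX : Matrix (Fin nX) (Fin n) (ZMod 2)) (HZ : Matrix (Fin nZ) (Fin n) (ZMod 2))
    (HC : Matrix (Fin r) (Fin nc) (ZMod 2))
    (hcss : HX * HZ.transpose = 0)
    (hrank : LinearIndependent (ZMod 2) (fun i : Fin r => HC i)) :
    (kerMat (thickX HX HC) =
        rowSpan (thickZ HX HZ HC) ⊔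
          Submodule.span (ZMod 2)
            {w : ((Fin n × Fin nc) ⊕ (Fin nX × Fin r)) → ZMod 2 |
              ∃ (z : Fin n → ZMod 2) (u : Fin nc → ZMod 2),
                HX.mulVec z = 0 ∧
                  w = Sum.elim (fun p : Fin n × Fin nc => z p.1 * u p.2)
                        (fun _ : Fin nX × Fin r => 0)}) ∧
      (∀ z : Fin n → ZMod 2, HX.mulVec z = 0 → z ∉ rowSpan HZ →
        ∀ u : Fin nc → ZMod 2, u ∉ rowSpan HC →
          Sum.elim (fun p : Fin n × Fin nc => z p.1 * u p.2)
              (fun _ : Fin nX × Fin r => (0 : ZMod 2)) ∉ rowSpan (thickZ HX HZ HC)) :=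
  ⟨le_antisymm (kerMat_thickX_le HZ HC hrank)
      (sup_le (rowSpan_thickZ_le_kerMat_thickX HC hcss) (kerTensorSpan_le_kerMat_thickX HX HC)),
    fun _ _ hz _ hu => blockVec_vecMulVec_notMem_rowSpan_thickZ HC hz hu⟩
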